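/- The Beltrami metric, given at (x,y) in the open unit disc D = {(x,y) : x² + y² < 1} by the bilinear form with components g_{11} = (1 − y²)/(1 − x² − y²)², g_{12} = g_{21} = xy/(1 − x² − y²)², g_{22} = (1 − x²)/(1 − x² − y²)², is a smooth Riemannian metric on D (it is positive definite at every point of D), and its Gaussian curvature K is identically equal to −1. -/

import Mathlib

set_option maxHeartbeats 1000000


noncomputable section

/-- The plane ℝ², as `Fin 2 → ℝ`. -/
abbrev E2 : Type := Fin 2 → ℝ

/-- The standard basis vectors of ℝ². -/
def bas (a : Fin 2) : E2 := Pi.single a 1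

/-- Partial derivative ∂ₐ of a scalar function on ℝ². -/
def pd (a : Fin 2) (f : E2 → ℝ) (x : E2) : ℝ := fderiv ℝ f x (bas a)

/-- Components Γ_{ab}{}^c of a Christoffel map Γ : ℝ² → (ℝ² →ₗ ℝ² →ₗ ℝ²). -/
def chr (Γ : E2 → (E2 →ₗ[ℝ] E2 →ₗ[ℝ] E2)) (a b c : Fin 2) (x : E2) : ℝ :=
  Γ x (bas a) (bas b) c

/-- Ricci tensor components built from Christoffel components `Γc a b c` (= Γ_{ab}{}^c):
`R_{ad} = ∂_cΓ_{ad}{}^c − ∂_aΓ_{cd}{}^c + Γ_{cb}{}^cΓ_{ad}{}^b − Γ_{ab}{}^cΓ_{cd}{}^b`. -/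
def ricciC (Γc : Fin 2 → Fin 2 → Fin 2 → E2 → ℝ) (a d : Fin 2) (x : E2) : ℝ :=
  (∑ c, pd c (Γc a d c) x) - (∑ c, pd a (Γc c d c) x)
  + (∑ b, ∑ c, Γc c b c x * Γc a d b x)
  - (∑ b, ∑ c, Γc a b c x * Γc c d b x)

/-- Covariant derivative of the Ricci tensor:
`∇_aR_{bc} = ∂_aR_{bc} − Γ_{ab}{}^dR_{dc} − Γ_{ac}{}^dR_{bd}`. -/
def covRicciC (Γc : Fin 2 → Fin 2 → Fin 2 → E2 → ℝ) (a b c : Fin 2) (x : E2) : ℝ :=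
  pd a (ricciC Γc b c) x - (∑ d, Γc a b d x * ricciC Γc d c x)
    - (∑ d, Γc a c d x * ricciC Γc b d x)

/-- `Y_{abc} = ∇_aR_{bc} − ∇_bR_{ac}`. -/
def YC (Γc : Fin 2 → Fin 2 → Fin 2 → E2 → ℝ) (a b c : Fin 2) (x : E2) : ℝ :=
  covRicciC Γc a b c x - covRicciC Γc b a c x

/-- Levi-Civita Christoffel symbols of a metric `g` (matrix-valued map):
`Γ_{ab}{}^c = ½ g^{cd}(∂_a g_{bd} + ∂_b g_{ad} − ∂_d g_{ab})`. -/
def chrLC (g : E2 → Matrix (Fin 2) (Fin 2) ℝ) (a b c : Fin 2) (x : E2) : ℝ :=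
  (1/2) * ∑ d, (g x)⁻¹ c d *
    (pd a (fun y => g y b d) x + pd b (fun y => g y a d) x - pd d (fun y => g y a b) x)

/-- Gaussian curvature `K = ½ g^{ab} R_{ab}` of a metric on an open subset of ℝ². -/
def gauss (g : E2 → Matrix (Fin 2) (Fin 2) ℝ) (x : E2) : ℝ :=
  (1/2) * ∑ a, ∑ b, (g x)⁻¹ a b * ricciC (chrLC g) a b x

/-- The Beltrami metric `((1−y²)dx² + 2xy dx dy + (1−x²)dy²)/(1−x²−y²)²` on the unit disc. -/
def beltrami : E2 → Matrix (Fin 2) (Fin 2) ℝ := fun z =>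
  let x := z 0
  let y := z 1
  Matrix.of
    ![![(1 - y^2) / (1 - x^2 - y^2)^2, (x*y) / (1 - x^2 - y^2)^2],
      ![(x*y) / (1 - x^2 - y^2)^2, (1 - x^2) / (1 - x^2 - y^2)^2]]

/-- The open unit disc in ℝ². -/
def unitDisc : Set E2 := {z : E2 | (z 0)^2 + (z 1)^2 < 1}


/-! ### Auxiliary machinery -/

def prj (i : Fin 2) : E2 →L[ℝ] ℝ := ContinuousLinearMap.proj i

lemma hasFDerivAt_coord (i : Fin 2) (z : E2) : HasFDerivAt (fun w : E2 => w i) (prj i) z :=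
  (prj i).hasFDerivAt

lemma pd_of_hasFDerivAt {f : E2 → ℝ} {L : E2 →L[ℝ] ℝ} {z : E2} (h : HasFDerivAt f L z)
    (a : Fin 2) : pd a f z = L (bas a) := by rw [pd, h.fderiv]

lemma prj_bas (i a : Fin 2) : prj i (bas a) = if a = i then 1 else 0 := by
  simp [prj, bas, Pi.single_apply, eq_comm]

lemma my_inv {f : E2 → ℝ} {L : E2 →L[ℝ] ℝ} {z : E2} (hf : HasFDerivAt f L z)
    (h : f z ≠ 0) : HasFDerivAt (fun w => (f w)⁻¹) ((-((f z)^2)⁻¹) • L) z :=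
  (hasDerivAt_inv h).comp_hasFDerivAt z hf

lemma my_div {N D : E2 → ℝ} {LN LD : E2 →L[ℝ] ℝ} {z : E2} (hN : HasFDerivAt N LN z)
    (hD : HasFDerivAt D LD z) (h : D z ≠ 0) :
    HasFDerivAt (fun w => N w / D w) (N z • ((-((D z)^2)⁻¹) • LD) + (D z)⁻¹ • LN) z := by
  simp only [div_eq_mul_inv]
  exact hN.mul (my_inv hD h)

lemma my_sq {f : E2 → ℝ} {L : E2 →L[ℝ] ℝ} {z : E2} (hf : HasFDerivAt f L z) :
    HasFDerivAt (fun w => (f w)^2) ((2 * f z) • L) z := by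
  simpa [Function.comp_def] using (hasDerivAt_pow 2 (f z)).comp_hasFDerivAt z hf

/-- `S z = 1 - x^2 - y^2`. -/
def S : E2 → ℝ := fun w => 1 - (w 0)^2 - (w 1)^2

lemma hasFDerivAt_S (z : E2) :
    HasFDerivAt S ((0 - (2 * z 0) • prj 0) - (2 * z 1) • prj 1) z :=
  ((hasFDerivAt_const (1:ℝ) z).sub (my_sq (hasFDerivAt_coord 0 z))).sub
    (my_sq (hasFDerivAt_coord 1 z))

lemma pd_lin_div {z : E2} (hz : S z ≠ 0) (p q : ℝ) (a : Fin 2) :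
    pd a (fun w => (p * w 0 + q * w 1) / S w) z =
      ((if a = 0 then p else q) * S z + (p * z 0 + q * z 1) * (2 * z a)) / (S z)^2 := by
  have hN := ((hasFDerivAt_coord 0 z).const_mul p).add ((hasFDerivAt_coord 1 z).const_mul q)
  rw [pd_of_hasFDerivAt (my_div (N := fun w => p * w 0 + q * w 1) hN (hasFDerivAt_S z) hz) a]
  fin_cases a <;> simp [prj_bas] <;> field_simp <;> ring

lemma pd_quad_div {z : E2} (hz : S z ≠ 0) (α β γ δ : ℝ) (a : Fin 2) :
    pd a (fun w => (α + β*(w 0)^2 + γ*(w 1)^2 + δ*(w 0 * w 1)) / (S w)^2) z =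
      ((if a = 0 then 2*β*z 0 + δ*z 1 else 2*γ*z 1 + δ*z 0) * S z
        + 4 * z a * (α + β*(z 0)^2 + γ*(z 1)^2 + δ*(z 0 * z 1))) / (S z)^3 := by
  have hN := (((hasFDerivAt_const α z).add ((my_sq (hasFDerivAt_coord 0 z)).const_mul β)).add
      ((my_sq (hasFDerivAt_coord 1 z)).const_mul γ)).add
      (((hasFDerivAt_coord 0 z).mul (hasFDerivAt_coord 1 z)).const_mul δ)
  have hD := my_sq (hasFDerivAt_S z)
  have hz2 : (S z)^2 ≠ 0 := pow_ne_zero _ hz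
  rw [pd_of_hasFDerivAt (my_div (N := fun w => α + β*(w 0)^2 + γ*(w 1)^2 + δ*(w 0 * w 1))
    (D := fun w => (S w)^2) hN hD hz2) a]
  fin_cases a <;> simp [prj_bas] <;> field_simp <;> ring

/-! ### The Beltrami metric: components, inverse, Christoffels -/

def cA (b d : Fin 2) : ℝ := if b = d then 1 else 0
def cB (b d : Fin 2) : ℝ := if b = 1 ∧ d = 1 then -1 else 0
def cC (b d : Fin 2) : ℝ := if b = 0 ∧ d = 0 then -1 else 0
def cD (b d : Fin 2) : ℝ := if b = d then 0 else 1

lemma bel_eq (b d : Fin 2) : (fun y : E2 => beltrami y b d)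
    = fun y => (cA b d + cB b d*(y 0)^2 + cC b d*(y 1)^2 + cD b d*(y 0 * y 1)) / (S y)^2 := by
  fin_cases b <;> fin_cases d <;>
    (funext y; simp [beltrami, S, cA, cB, cC, cD]; try ring)

lemma bel_val (b d : Fin 2) (z : E2) : beltrami z b d
    = (cA b d + cB b d*(z 0)^2 + cC b d*(z 1)^2 + cD b d*(z 0 * z 1)) / (S z)^2 :=
  congrFun (bel_eq b d) z

lemma pd_bel {z : E2} (hz : S z ≠ 0) (a b d : Fin 2) :
    pd a (fun y => beltrami y b d) z =
      ((if a = 0 then 2*(cB b d)*z 0 + (cD b d)*z 1 else 2*(cC b d)*z 1 + (cD b d)*z 0) * S z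
        + 4 * z a * (cA b d + cB b d*(z 0)^2 + cC b d*(z 1)^2 + cD b d*(z 0 * z 1))) / (S z)^3 := by
  rw [bel_eq]; exact pd_quad_div hz _ _ _ _ a

/-- Explicit inverse of the Beltrami metric: `s • [[1-x^2, -xy],[-xy, 1-y^2]]`. -/
def Minv (w : E2) : Matrix (Fin 2) (Fin 2) ℝ :=
  Matrix.of ![![S w * (1 - (w 0)^2), -(S w * (w 0 * w 1))],
               ![-(S w * (w 0 * w 1)), S w * (1 - (w 1)^2)]]

lemma S_pos {z : E2} (hz : z ∈ unitDisc) : 0 < S z := by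
  have := hz; simp only [unitDisc, Set.mem_setOf_eq] at this; simp only [S]; linarith

lemma S_ne {z : E2} (hz : z ∈ unitDisc) : S z ≠ 0 := ne_of_gt (S_pos hz)

lemma inv_bel {w : E2} (hw : w ∈ unitDisc) : (beltrami w)⁻¹ = Minv w := by
  have hs : (1 : ℝ) - (w 0)^2 - (w 1)^2 ≠ 0 := by have := S_ne hw; simpa [S] using this
  apply Matrix.inv_eq_right_inv
  ext i j
  fin_cases i <;> fin_cases j <;>
    (simp [Matrix.mul_apply, Fin.sum_univ_two, beltrami, Minv, Matrix.one_apply, S];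
     field_simp; ring)

/-- Christoffel coefficients: `Γ_{ab}{}^c = (δ_a^c z_b + δ_b^c z_a)/s`, written so that the
numerator is linear with coefficients `gp a b c 0`, `gp a b c 1`. -/
def gp (a b c i : Fin 2) : ℝ :=
  (if a = c then (if b = i then 1 else 0) else 0) + (if b = c then (if a = i then 1 else 0) else 0)

def Gam (a b c : Fin 2) : E2 → ℝ :=
  fun z => (gp a b c 0 * z 0 + gp a b c 1 * z 1) / S z

lemma pd_Gam {z : E2} (hz : S z ≠ 0) (e a b c : Fin 2) :
    pd e (Gam a b c) z =
      ((if e = 0 then gp a b c 0 else gp a b c 1) * S z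
        + (gp a b c 0 * z 0 + gp a b c 1 * z 1) * (2 * z e)) / (S z)^2 := by
  have h : Gam a b c = fun w => (gp a b c 0 * w 0 + gp a b c 1 * w 1) / S w := rfl
  rw [h, pd_lin_div hz]

lemma chrLC_eq {w : E2} (hw : w ∈ unitDisc) (a b c : Fin 2) :
    chrLC beltrami a b c w = Gam a b c w := by
  have hs := S_ne hw
  have hs' : (1 : ℝ) - (w 0)^2 - (w 1)^2 ≠ 0 := by simpa [S] using hs
  simp only [chrLC, Fin.sum_univ_two, inv_bel hw, pd_bel hs]
  fin_cases a <;> fin_cases b <;> fin_cases c <;>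
    (simp [Minv, Gam, gp, cA, cB, cC, cD, S]; field_simp; ring)

lemma isOpen_unitDisc : IsOpen unitDisc := by
  have : unitDisc = (fun z : E2 => (z 0)^2 + (z 1)^2) ⁻¹' (Set.Iio 1) := rfl
  rw [this]
  exact IsOpen.preimage (by continuity) isOpen_Iio

lemma pd_chrLC {z : E2} (hz : z ∈ unitDisc) (e a b c : Fin 2) :
    pd e (chrLC beltrami a b c) z = pd e (Gam a b c) z := by
  unfold pd
  congr 1
  apply Filter.EventuallyEq.fderiv_eq
  exact Filter.eventuallyEq_of_mem (isOpen_unitDisc.mem_nhds hz)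
    (fun w hw => chrLC_eq hw a b c)

lemma ricci_eq {z : E2} (hz : z ∈ unitDisc) (a d : Fin 2) :
    ricciC (chrLC beltrami) a d z = -(beltrami z a d) := by
  have hs := S_ne hz
  have hs' : (1 : ℝ) - (z 0)^2 - (z 1)^2 ≠ 0 := by simpa [S] using hs
  fin_cases a <;> fin_cases d <;>
    (simp only [ricciC, Fin.sum_univ_two, pd_chrLC hz, pd_Gam hs, chrLC_eq hz, bel_val];
     simp [Gam, gp, cA, cB, cC, cD, S]; field_simp; ring)

lemma gauss_eq {z : E2} (hz : z ∈ unitDisc) : gauss beltrami z = -1 := by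
  have hs := S_ne hz
  have hs' : (1 : ℝ) - (z 0)^2 - (z 1)^2 ≠ 0 := by simpa [S] using hs
  simp only [gauss, Fin.sum_univ_two, inv_bel hz, ricci_eq hz, bel_val]
  simp [Minv, cA, cB, cC, cD, S]
  field_simp
  ring

lemma contDiff_coord (i : Fin 2) : ContDiff ℝ (⊤ : ℕ∞) (fun y : E2 => y i) := (prj i).contDiff

lemma contDiff_S : ContDiff ℝ (⊤ : ℕ∞) S :=
  (contDiff_const.sub ((contDiff_coord 0).pow 2)).sub ((contDiff_coord 1).pow 2)

lemma contDiffOn_bel (a b : Fin 2) : ContDiffOn ℝ (⊤ : ℕ∞) (fun z => beltrami z a b) unitDisc := by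
  rw [bel_eq]
  apply ContDiffOn.div
  · apply ContDiff.contDiffOn
    exact ((contDiff_const.add (contDiff_const.mul ((contDiff_coord 0).pow 2))).add
      (contDiff_const.mul ((contDiff_coord 1).pow 2))).add
      (contDiff_const.mul ((contDiff_coord 0).mul (contDiff_coord 1)))
  · exact (contDiff_S.pow 2).contDiffOn
  · intro w hw
    exact pow_ne_zero 2 (S_ne hw)

lemma posDef_bel {z : E2} (hz : z ∈ unitDisc) : (beltrami z).PosDef := by
  have hz' : (z 0)^2 + (z 1)^2 < 1 := hz
  have hs : (0:ℝ) < 1 - (z 0)^2 - (z 1)^2 := by linarith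
  rw [Matrix.posDef_iff_dotProduct_mulVec]
  constructor
  · ext i j
    fin_cases i <;> fin_cases j <;> simp [beltrami, Matrix.conjTranspose_apply] <;> ring
  · intro v hv
    have hv' : v 0 ≠ 0 ∨ v 1 ≠ 0 := by
      by_contra h
      push_neg at h
      exact hv (funext fun i => by fin_cases i <;> simp [h.1, h.2])
    have hpos : 0 < (v 0)^2 + (v 1)^2 := by
      rcases hv' with h | h <;> positivity
    simp only [dotProduct, Matrix.mulVec, Fin.sum_univ_two, beltrami,
      Matrix.of_apply, Matrix.cons_val_zero, Matrix.cons_val_one, Matrix.head_cons,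
      star_trivial, RCLike.star_def]
    have key : (1 - (z 1)^2) * (v 0)^2 + 2 * (z 0 * z 1) * (v 0 * v 1)
        + (1 - (z 0)^2) * (v 1)^2 > 0 := by
      nlinarith [sq_nonneg (z 0 * v 0 + z 1 * v 1), mul_pos hpos hs]
    have h2 : (0:ℝ) < (1 - (z 0)^2 - (z 1)^2)^2 := by positivity
    rw [show (0:ℝ) < v 0 * ((1 - z 1 ^ 2) / (1 - z 0 ^ 2 - z 1 ^ 2) ^ 2 * v 0
        + z 0 * z 1 / (1 - z 0 ^ 2 - z 1 ^ 2) ^ 2 * v 1)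
        + v 1 * (z 0 * z 1 / (1 - z 0 ^ 2 - z 1 ^ 2) ^ 2 * v 0
        + (1 - z 0 ^ 2) / (1 - z 0 ^ 2 - z 1 ^ 2) ^ 2 * v 1) ↔ True from iff_of_eq (eq_true (by
      have := div_pos key h2
      calc (0:ℝ) < ((1 - (z 1)^2) * (v 0)^2 + 2 * (z 0 * z 1) * (v 0 * v 1)
            + (1 - (z 0)^2) * (v 1)^2) / (1 - z 0 ^ 2 - z 1 ^ 2)^2 := this
        _ = _ := by field_simp; ring))]
    trivial

/-- the Beltrami metric is a smooth Riemannian metric on the open unit disc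
(positive definite at every point of the disc) with Gaussian curvature identically `−1`. -/
theorem stmt_16 :
    (∀ a b : Fin 2, ContDiffOn ℝ (⊤ : ℕ∞) (fun z => beltrami z a b) unitDisc) ∧
    (∀ z ∈ unitDisc, (beltrami z).PosDef) ∧
    (∀ z ∈ unitDisc, gauss beltrami z = -1) := by
  exact ⟨contDiffOn_bel, fun z hz => posDef_bel hz, fun z hz => gauss_eq hz⟩
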